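/- arXiv:1511.02470 — 3 statements merged into one kernel-verified Lean document; each statement's English description precedes it below -/
import Mathlib

section
/- Assume q₂ = u₂ + v₂·i ∈ Z[i]\{0}, r₂ = x₂ + y₂·i ∈ Z[i] with r₂ and q₂ coprime in Z[i], set k = x₂·u₂ + y₂·v₂ and l = x₂·v₂ − y₂·u₂, and let u, v, ũ, ṽ ∈ ℤ. Then the quantity |f((u·k + v·l)/N(q₂)) − f((ũ·k + ṽ·l)/N(q₂))|² + |f((−v·k + u·l)/N(q₂)) − f((−ṽ·k + ũ·l)/N(q₂))|² is at least 1/N(q₂) if q₂ does not divide (u−ũ) + (v−ṽ)·i in Z[i], and equals 0 if q₂ divides (u−ũ) + (v−ṽ)·i in Z[i]. -/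
/-!
Write `q = u₂ + v₂ i`, `r = x₂ + y₂ i`, `d = (u - ũ) + (v - ṽ) i`. Then `k + l i = q r̄`, and the
two numerators of the differences are the real and imaginary parts of `d̄ q r̄`. Up to integers,
the two differences of `f`-values are therefore the coordinates of `(d̄ q r̄ - N(q) c) / N(q)` for
some `c ∈ ℤ[i]`, and `d̄ q r̄ - N(q) c = q · conj(d r - q c̄)`. If `q ∤ d`, coprimality gives
`q ∤ d r`, so the second factor has norm at least `1` and the sum of squares is at least
`N(q) / N(q)² = 1 / N(q)`. If `q ∣ d`, then `N(q) = q q̄` divides `d̄ q r̄` and both differences vanish.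
-/

noncomputable section

def GCoprime (r q : GaussianInt) : Prop :=
  ∀ d : GaussianInt, d ∣ r → d ∣ q → IsUnit d

def ffrac (z : ℝ) : ℝ := Int.fract (z + 1 / 2) - 1 / 2

open Zsqrtd

lemma ffrac_add_intCast (z : ℝ) (n : ℤ) : ffrac (z + n) = ffrac z := by
  rw [ffrac, ffrac, add_right_comm, Int.fract_add_intCast]

lemma exists_ffrac_sub_ffrac_eq (x y : ℝ) : ∃ m : ℤ, ffrac x - ffrac y = x - y - m :=
  ⟨⌊x + 1 / 2⌋ - ⌊y + 1 / 2⌋, by simp only [ffrac, Int.fract]; push_cast; ring⟩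

lemma ffrac_intCast_div_eq_of_dvd_sub {N a a' : ℤ} (h : N ∣ a - a') :
    ffrac ((a : ℝ) / N) = ffrac ((a' : ℝ) / N) := by
  obtain ⟨t, ht⟩ := h
  rcases eq_or_ne N 0 with rfl | hN
  · simp
  rw [eq_add_of_sub_eq' ht, Int.cast_add, add_div, Int.cast_mul, mul_div_cancel_left₀ _
    (Int.cast_ne_zero.2 hN), ffrac_add_intCast]

lemma exists_sq_abs_ffrac_sub_add_sq_abs_ffrac_sub {N : ℤ} (hN : N ≠ 0) (a a' b b' : ℤ) :
    ∃ c : GaussianInt,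
      |ffrac ((a : ℝ) / N) - ffrac ((a' : ℝ) / N)| ^ 2 +
        |ffrac ((b : ℝ) / N) - ffrac ((b' : ℝ) / N)| ^ 2 =
      ((⟨a - a', b - b'⟩ - N * c : GaussianInt).norm : ℝ) / (N : ℝ) ^ 2 := by
  obtain ⟨m, hm⟩ := exists_ffrac_sub_ffrac_eq ((a : ℝ) / N) ((a' : ℝ) / N)
  obtain ⟨n, hn⟩ := exists_ffrac_sub_ffrac_eq ((b : ℝ) / N) ((b' : ℝ) / N)
  refine ⟨⟨m, n⟩, ?_⟩
  have hN' : (N : ℝ) ≠ 0 := Int.cast_ne_zero.2 hN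
  rw [hm, hn, sq_abs, sq_abs, norm_def]
  simp only [smul_val, re_sub, im_sub, Int.cast_sub, Int.cast_mul]
  field_simp
  ring

namespace GaussianInt

lemma norm_le_norm_star_mul_sub {q r d : GaussianInt} (hqr : IsCoprime q r) (hqd : ¬q ∣ d)
    (c : GaussianInt) : q.norm ≤ (star d * (q * star r) - q.norm * c).norm := by
  have hfactor : star d * (q * star r) - q.norm * c = q * star (d * r - q * star c) := by
    rw [norm_eq_mul_conj]
    simp only [star_sub, star_mul, star_star]
    ring
  have hne : d * r - q * star c ≠ 0 := fun h =>
    hqd (hqr.dvd_of_dvd_mul_right ⟨star c, sub_eq_zero.1 h⟩)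
  rw [hfactor, norm_mul, norm_conj]
  exact le_mul_of_one_le_right (norm_nonneg q) (norm_pos.2 hne)

lemma norm_dvd_star_mul_of_dvd {q d : GaussianInt} (hqd : q ∣ d) (r : GaussianInt) :
    (q.norm : GaussianInt) ∣ star d * (q * star r) := by
  obtain ⟨s, rfl⟩ := hqd
  exact ⟨star s * star r, by rw [norm_eq_mul_conj, star_mul]; ring⟩

end GaussianInt

open GaussianInt

/-- The spacing lemma (Lemma 2). -/
theorem spacing_lemma (u₂ v₂ x₂ y₂ u v ut vt : ℤ)
    (hq : (⟨u₂, v₂⟩ : GaussianInt) ≠ 0)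
    (hcop : GCoprime ⟨x₂, y₂⟩ ⟨u₂, v₂⟩)
    (k l : ℤ) (hk : k = x₂ * u₂ + y₂ * v₂) (hl : l = x₂ * v₂ - y₂ * u₂)
    (Nq : ℝ) (hNq : Nq = (Zsqrtd.norm (⟨u₂, v₂⟩ : GaussianInt) : ℝ)) :
    (¬ ((⟨u₂, v₂⟩ : GaussianInt) ∣ ⟨u - ut, v - vt⟩) →
      1 / Nq ≤
        |ffrac (((u * k + v * l : ℤ) : ℝ) / Nq) - ffrac (((ut * k + vt * l : ℤ) : ℝ) / Nq)| ^ 2 +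
        |ffrac (((-v * k + u * l : ℤ) : ℝ) / Nq) - ffrac (((-vt * k + ut * l : ℤ) : ℝ) / Nq)| ^ 2) ∧
    (((⟨u₂, v₂⟩ : GaussianInt) ∣ ⟨u - ut, v - vt⟩) →
      |ffrac (((u * k + v * l : ℤ) : ℝ) / Nq) - ffrac (((ut * k + vt * l : ℤ) : ℝ) / Nq)| ^ 2 +
      |ffrac (((-v * k + u * l : ℤ) : ℝ) / Nq) - ffrac (((-vt * k + ut * l : ℤ) : ℝ) / Nq)| ^ 2
        = 0) := by
  set q : GaussianInt := ⟨u₂, v₂⟩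
  set r : GaussianInt := ⟨x₂, y₂⟩
  set d : GaussianInt := ⟨u - ut, v - vt⟩
  have hnumerators : (⟨u * k + v * l - (ut * k + vt * l), -v * k + u * l - (-vt * k + ut * l)⟩ :
      GaussianInt) = star d * (q * star r) := by
    ext <;> simp only [q, r, d, hk, hl, star_mk, re_mul, im_mul] <;> ring
  have hN : q.norm ≠ 0 := norm_eq_zero.not.2 hq
  have hNpos : (0 : ℝ) < q.norm := Int.cast_pos.2 ((norm_nonneg q).lt_of_ne' hN)
  subst hNq
  refine ⟨fun hqd => ?_, fun hqd => ?_⟩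
  · obtain ⟨c, hc⟩ := exists_sq_abs_ffrac_sub_add_sq_abs_ffrac_sub hN
      (u * k + v * l) (ut * k + vt * l) (-v * k + u * l) (-vt * k + ut * l)
    have hle := norm_le_norm_star_mul_sub (IsRelPrime.isCoprime hcop).symm hqd c
    rw [hc, hnumerators, le_div_iff₀ (by positivity), one_div, sq, ← mul_assoc,
      inv_mul_cancel₀ hNpos.ne', one_mul]
    exact_mod_cast hle
  · obtain ⟨hre, him⟩ := (intCast_dvd _ _).1 (hnumerators ▸ norm_dvd_star_mul_of_dvd hqd r)
    rw [ffrac_intCast_div_eq_of_dvd_sub hre, ffrac_intCast_div_eq_of_dvd_sub him]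
    simp
end
end

section
/- Assume q₂ = u₂ + v₂·i ∈ Z[i]\{0}, r₂ = x₂ + y₂·i ∈ Z[i] with r₂ and q₂ coprime in Z[i], set k = x₂·u₂ + y₂·v₂ and l = x₂·v₂ − y₂·u₂, and let u, v, ũ, ṽ ∈ ℤ. Then the point (f((u·k + v·l)/N(q₂)), f((−v·k + u·l)/N(q₂))) ∈ ℝ² equals the point (f((ũ·k + ṽ·l)/N(q₂)), f((−ṽ·k + ũ·l)/N(q₂))) if and only if q₂ divides (u−ũ) + (v−ṽ)·i in Z[i]. -/
noncomputable section

lemma ffrac_eq_iff (x y : ℝ) : ffrac x = ffrac y ↔ ∃ z : ℤ, x - y = z := by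
  unfold ffrac
  rw [sub_left_inj, Int.fract_eq_fract]
  constructor
  · rintro ⟨z, hz⟩; exact ⟨z, by linarith⟩
  · rintro ⟨z, hz⟩; exact ⟨z, by linarith⟩

/-- Equality of the two points in `ℝ²` holds iff `q₂ ∣ (u-ut) + (v-vt)i`. -/
theorem spacing_points_eq_iff (u₂ v₂ x₂ y₂ u v ut vt : ℤ)
    (hq : (⟨u₂, v₂⟩ : GaussianInt) ≠ 0)
    (hcop : GCoprime ⟨x₂, y₂⟩ ⟨u₂, v₂⟩)
    (k l : ℤ) (hk : k = x₂ * u₂ + y₂ * v₂) (hl : l = x₂ * v₂ - y₂ * u₂)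
    (Nq : ℝ) (hNq : Nq = (Zsqrtd.norm (⟨u₂, v₂⟩ : GaussianInt) : ℝ)) :
    ((ffrac (((u * k + v * l : ℤ) : ℝ) / Nq), ffrac (((-v * k + u * l : ℤ) : ℝ) / Nq))
        : ℝ × ℝ)
      = (ffrac (((ut * k + vt * l : ℤ) : ℝ) / Nq), ffrac (((-vt * k + ut * l : ℤ) : ℝ) / Nq))
      ↔ (⟨u₂, v₂⟩ : GaussianInt) ∣ ⟨u - ut, v - vt⟩ := by
  set q : GaussianInt := ⟨u₂, v₂⟩ with hqdef
  set r : GaussianInt := ⟨x₂, y₂⟩ with hrdef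
  have hNint : q.norm ≠ 0 := by
    intro h; exact hq ((Zsqrtd.norm_eq_zero_iff (by norm_num) q).mp h)
  have hN0 : Nq ≠ 0 := by
    rw [hNq]; exact_mod_cast hNint
  have key : ∀ A B : ℤ, (ffrac ((A : ℝ) / Nq) = ffrac ((B : ℝ) / Nq) ↔ q.norm ∣ (A - B)) := by
    intro A B
    rw [ffrac_eq_iff, div_sub_div_same]
    constructor
    · rintro ⟨z, hz⟩
      refine ⟨z, ?_⟩
      rw [div_eq_iff hN0, hNq, mul_comm] at hz
      exact_mod_cast hz
    · rintro ⟨z, hz⟩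
      refine ⟨z, ?_⟩
      rw [div_eq_iff hN0, hNq, mul_comm]
      exact_mod_cast hz
  rw [Prod.mk.injEq, key, key]
  set a := u - ut with ha
  set b := v - vt with hb
  have e1 : u * k + v * l - (ut * k + vt * l) = a * k + b * l := by ring
  have e2 : -v * k + u * l - (-vt * k + ut * l) = -b * k + a * l := by ring
  rw [e1, e2]
  have hw : (⟨a, b⟩ : GaussianInt) * r * star q = ⟨a * k + b * l, -(-b * k + a * l)⟩ := by
    subst hk hl
    ext <;> simp [Zsqrtd.re_mul, Zsqrtd.im_mul, hqdef, hrdef] <;> ring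
  have hc : IsCoprime r q := by
    rw [← EuclideanDomain.gcd_isUnit_iff]
    exact hcop _ (EuclideanDomain.gcd_dvd_left r q) (EuclideanDomain.gcd_dvd_right r q)
  constructor
  · rintro ⟨h1, h2⟩
    have hdvd : (q.norm : GaussianInt) ∣ (⟨a, b⟩ : GaussianInt) * r * star q := by
      rw [Zsqrtd.intCast_dvd, hw]
      exact ⟨h1, dvd_neg.mpr h2⟩
    rw [Zsqrtd.norm_eq_mul_conj] at hdvd
    have hq' : q ∣ (⟨a, b⟩ : GaussianInt) * r :=
      (mul_dvd_mul_iff_right (star_ne_zero.mpr hq)).mp hdvd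
    exact hc.symm.dvd_of_dvd_mul_right hq'
  · intro h
    have hdvd : (q.norm : GaussianInt) ∣ (⟨a, b⟩ : GaussianInt) * r * star q := by
      rw [Zsqrtd.norm_eq_mul_conj]
      exact mul_dvd_mul (h.mul_right r) dvd_rfl
    rw [Zsqrtd.intCast_dvd, hw] at hdvd
    exact ⟨hdvd.1, dvd_neg.mp hdvd.2⟩
end
end

section
/- Let q₂ = u₂ + v₂·i ∈ Z[i]\{0} and r₂ = x₂ + y₂·i ∈ Z[i] be coprime in Z[i], and set k = x₂·u₂ + y₂·v₂ and l = x₂·v₂ − y₂·u₂. Then for all integers u₀, v₀, the two congruences u₀·k + v₀·l ≡ 0 (mod N(q₂)) and −v₀·k + u₀·l ≡ 0 (mod N(q₂)) hold simultaneously if and only if q₂ divides u₀ + v₀·i in Z[i]. -/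
noncomputable section

/-- The congruence system `u₀k + v₀l ≡ 0`, `-v₀k + u₀l ≡ 0 (mod N(q₂))` holds iff
`q₂ ∣ u₀ + v₀ i` in `ℤ[i]`. -/
theorem congruence_system_iff (u₂ v₂ x₂ y₂ : ℤ)
    (hq : (⟨u₂, v₂⟩ : GaussianInt) ≠ 0)
    (hcop : GCoprime ⟨x₂, y₂⟩ ⟨u₂, v₂⟩)
    (k l : ℤ) (hk : k = x₂ * u₂ + y₂ * v₂) (hl : l = x₂ * v₂ - y₂ * u₂)
    (u₀ v₀ : ℤ) :
    (u₀ * k + v₀ * l ≡ 0 [ZMOD Zsqrtd.norm (⟨u₂, v₂⟩ : GaussianInt)] ∧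
      -v₀ * k + u₀ * l ≡ 0 [ZMOD Zsqrtd.norm (⟨u₂, v₂⟩ : GaussianInt)])
      ↔ (⟨u₂, v₂⟩ : GaussianInt) ∣ ⟨u₀, v₀⟩ := by
  set q : GaussianInt := ⟨u₂, v₂⟩ with hqdef
  set r : GaussianInt := ⟨x₂, y₂⟩ with hrdef
  set w : GaussianInt := ⟨u₀, v₀⟩ with hwdef
  have hconjq : (star q) ≠ 0 := by
    simpa using hq
  -- coprimality
  have hcop' : IsCoprime q r := by
    rw [← EuclideanDomain.gcd_isUnit_iff]
    exact hcop _ (EuclideanDomain.gcd_dvd_right q r) (EuclideanDomain.gcd_dvd_left q r)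
  -- product computation
  have hprod : w * r * (star q) = ⟨u₀ * k + v₀ * l, -(-v₀ * k + u₀ * l)⟩ := by
    subst hk hl
    ext <;> simp [hqdef, hrdef, hwdef, Zsqrtd.re_mul, Zsqrtd.im_mul, Zsqrtd.re_star, Zsqrtd.im_star] <;> ring
  have hNmul : ((q.norm : GaussianInt)) = q * (star q) := Zsqrtd.norm_eq_mul_conj q
  constructor
  · rintro ⟨h1, h2⟩
    rw [Int.ModEq] at h1 h2
    simp only [Int.zero_emod, ← Int.dvd_iff_emod_eq_zero] at h1 h2
    have hdvd : (q.norm : GaussianInt) ∣ w * r * (star q) := by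
      rw [hprod, Zsqrtd.intCast_dvd]
      exact ⟨h1, (dvd_neg).mpr h2⟩
    rw [hNmul] at hdvd
    have : q ∣ w * r := by
      rcases hdvd with ⟨c, hc⟩
      refine ⟨c, mul_right_cancel₀ hconjq ?_⟩
      rw [hc]; ring
    exact hcop'.dvd_of_dvd_mul_right this
  · intro h
    have hdvd : (q.norm : GaussianInt) ∣ w * r * (star q) := by
      rw [hNmul]
      rcases h with ⟨c, hc⟩
      exact ⟨c * r, by rw [hc]; ring⟩
    rw [hprod, Zsqrtd.intCast_dvd] at hdvd
    obtain ⟨h1, h2⟩ := hdvd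
    rw [dvd_neg] at h2
    constructor <;> rw [Int.ModEq] <;>
      simp only [Int.zero_emod, ← Int.dvd_iff_emod_eq_zero] <;> assumption
end
end
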